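/- Zeeman's theorem fails in dimension 2: there exists a bijection F : ℝ² → ℝ² such that for all x, y ∈ ℝ², x ≤ y if and only if F(x) ≤ F(y) (where ≤ is the causal relation of 2-dimensional Minkowski space), but F is not of the form F(x) = a • (A x) + b for any real a > 0, Lorentz matrix A, and vector b ∈ ℝ². -/

import Mathlib

/-!
In null coordinates `u = x₀ + x₁`, `v = x₀ - x₁` the causal order of `ℝ²₁` is the product
order of `ℝ × ℝ`, so applying any increasing bijection of `ℝ` to `u` alone is a causal isomorphism.
A map `x ↦ a • A x + b` satisfies `F x + F (-x) = 2 F 0`, which forces the chosen bijection `f`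
to satisfy `f 1 + f (-1) = 2 f 0`; the kink `u ↦ max u (2u)` does not.
-/

/-- The Minkowski quadratic form on `ℝ²`: `Q v = v₀² - v₁²`. -/
def minkowskiQ (v : Fin 2 → ℝ) : ℝ :=
  (v 0) ^ 2 - (v 1) ^ 2

/-- The causal relation on 2-dimensional Minkowski space:
`x ≤ y` iff `Q (y - x) ≥ 0` and `(y - x)₀ ≥ 0`. -/
def causalLE (x y : Fin 2 → ℝ) : Prop :=
  0 ≤ minkowskiQ (y - x) ∧ 0 ≤ (y - x) 0

/-- A `2 × 2` matrix is Lorentz if it preserves the Minkowski quadratic form. -/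
def IsLorentz (A : Matrix (Fin 2) (Fin 2) ℝ) : Prop :=
  ∀ v : Fin 2 → ℝ, minkowskiQ (A.mulVec v) = minkowskiQ v

theorem causalLE_iff_null_le (x y : Fin 2 → ℝ) :
    causalLE x y ↔ x 0 + x 1 ≤ y 0 + y 1 ∧ x 0 - x 1 ≤ y 0 - y 1 := by
  simp only [causalLE, minkowskiQ, Pi.sub_apply]
  constructor
  · rintro ⟨hQ, htime⟩
    constructor <;>
      nlinarith [sq_nonneg (y 0 - x 0 + (y 1 - x 1)), sq_nonneg (y 0 - x 0 - (y 1 - x 1))]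
  · rintro ⟨hu, hv⟩
    constructor <;> nlinarith

/-- The point with null coordinates `x₀ + x₁ = u` and `x₀ - x₁ = v`. -/
noncomputable def ofNull (u v : ℝ) : Fin 2 → ℝ :=
  ![(u + v) / 2, (u - v) / 2]

@[simp]
theorem ofNull_apply_zero_add_one (u v : ℝ) : ofNull u v 0 + ofNull u v 1 = u := by
  simp only [ofNull, Matrix.cons_val_zero, Matrix.cons_val_one]
  ring

@[simp]
theorem ofNull_apply_zero_sub_one (u v : ℝ) : ofNull u v 0 - ofNull u v 1 = v := by
  simp only [ofNull, Matrix.cons_val_zero, Matrix.cons_val_one]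
  ring

theorem ofNull_null (x : Fin 2 → ℝ) : ofNull (x 0 + x 1) (x 0 - x 1) = x := by
  ext i
  fin_cases i <;> simp [ofNull]

theorem neg_ofNull (u v : ℝ) : -ofNull u v = ofNull (-u) (-v) := by
  ext i
  fin_cases i <;> simp [ofNull] <;> ring

noncomputable def nullWarp (f : ℝ ≃o ℝ) : (Fin 2 → ℝ) ≃ (Fin 2 → ℝ) where
  toFun x := ofNull (f (x 0 + x 1)) (x 0 - x 1)
  invFun y := ofNull (f.symm (y 0 + y 1)) (y 0 - y 1)
  left_inv x := by simp [ofNull_null]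
  right_inv y := by simp [ofNull_null]

theorem nullWarp_apply_zero_add_one (f : ℝ ≃o ℝ) (x : Fin 2 → ℝ) :
    nullWarp f x 0 + nullWarp f x 1 = f (x 0 + x 1) :=
  ofNull_apply_zero_add_one _ _

theorem causalLE_nullWarp_iff (f : ℝ ≃o ℝ) (x y : Fin 2 → ℝ) :
    causalLE (nullWarp f x) (nullWarp f y) ↔ causalLE x y := by
  simp [causalLE_iff_null_le, nullWarp]

theorem add_neg_eq_of_affine {R m n : Type*} [Ring R] [Fintype n]
    {F : (n → R) → (m → R)} {a : R} {A : Matrix m n R} {b : m → R}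
    (hF : ∀ x, F x = a • A.mulVec x + b) (x : n → R) :
    F x + F (-x) = F 0 + F 0 := by
  simp only [hF, Matrix.mulVec_neg, Matrix.mulVec_zero, smul_neg, smul_zero]
  abel

theorem nullWarp_not_affine (f : ℝ ≃o ℝ) (hf : f 1 + f (-1) ≠ f 0 + f 0) :
    ¬ ∃ (a : ℝ) (A : Matrix (Fin 2) (Fin 2) ℝ) (b : Fin 2 → ℝ),
      ∀ x, nullWarp f x = a • A.mulVec x + b := by
  rintro ⟨a, A, b, hF⟩
  have hsum := congrArg (fun y : Fin 2 → ℝ => y 0 + y 1) (add_neg_eq_of_affine hF (ofNull 1 0))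
  simp only [Pi.add_apply, neg_ofNull, neg_zero] at hsum
  have hx := nullWarp_apply_zero_add_one f (ofNull 1 0)
  have hnegx := nullWarp_apply_zero_add_one f (ofNull (-1) 0)
  have h0 := nullWarp_apply_zero_add_one f 0
  simp only [ofNull_apply_zero_add_one, Pi.zero_apply, add_zero] at hx hnegx h0
  exact hf (by linarith)

noncomputable def kink : ℝ ≃o ℝ :=
  StrictMono.orderIsoOfRightInverse (fun u => max u (2 * u))
    (fun _ _ huv => max_lt (lt_max_of_lt_left huv) (lt_max_of_lt_right (by linarith)))
    (fun u => min u (u / 2))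
    (fun u => by simp only [min_def, max_def]; split_ifs <;> linarith)

theorem kink_apply (u : ℝ) : kink u = max u (2 * u) :=
  rfl

theorem kink_one_add_kink_neg_one : kink 1 + kink (-1) ≠ kink 0 + kink 0 := by
  norm_num [kink_apply]

/-- Zeeman's theorem fails in dimension 2: there is a causal isomorphism of
2-dimensional Minkowski space that is not of the form `x ↦ a • (A x) + b` with
`a > 0` and `A` a Lorentz matrix. -/
theorem zeeman_fails_in_dim_two :
    ∃ F : (Fin 2 → ℝ) → (Fin 2 → ℝ),
      Function.Bijective F ∧
      (∀ x y : Fin 2 → ℝ, causalLE x y ↔ causalLE (F x) (F y)) ∧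
      ¬ ∃ (a : ℝ) (A : Matrix (Fin 2) (Fin 2) ℝ) (b : Fin 2 → ℝ),
          0 < a ∧ IsLorentz A ∧
          ∀ x : Fin 2 → ℝ, F x = a • A.mulVec x + b := by
  refine ⟨nullWarp kink, (nullWarp kink).bijective,
    fun x y => (causalLE_nullWarp_iff kink x y).symm, ?_⟩
  rintro ⟨a, A, b, -, -, hF⟩
  exact nullWarp_not_affine kink kink_one_add_kink_neg_one ⟨a, A, b, hF⟩
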